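/- Let A be a complete abelian category and let n, ℓ, N be nonnegative integers with n + 2 ≤ ℓ ≤ N. If G : FinSet*,≤N → A is polynomial of degree ≤ n, then the natural map from the limit of G ∘ ι over nonempty finite sets of size ≤ ℓ with surjections to G({*}) is an isomorphism. -/

import Mathlib

open CategoryTheory Limits

universe v u

/-- Skeleton of the category `FinSet*,≤N` of pointed finite sets `{*} ⊔ I` with
`|I| ≤ N`: the object `⟨m, _⟩` represents `{*} ⊔ Fin m` (`m ≤ N`); morphisms are
pointed maps, encoded as partially defined maps (`none` = basepoint). -/
structure PtdFinLe (N : ℕ) : Type where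
  n : ℕ
  hn : n ≤ N

instance {N : ℕ} : Category.{0} (PtdFinLe N) where
  Hom X Y := Fin X.n → Option (Fin Y.n)
  id X := some
  comp f g := fun i => (f i).bind g
  id_comp f := rfl
  comp_id f := by
    funext i; show (f i).bind some = f i; cases f i <;> rfl
  assoc f g h := by
    funext i
    show ((f i).bind g).bind h = (f i).bind fun j => (g j).bind h
    cases f i <;> rfl

/-- Skeleton of the category `FinSetSurj_ne,≤ℓ` of nonempty finite sets of size `≤ ℓ`
with surjective maps: the object `⟨m, _⟩` represents `Fin (m+1)` (`m + 1 ≤ ℓ`). -/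
structure SurjFinLe (l : ℕ) : Type where
  n : ℕ
  hn : n + 1 ≤ l

instance {l : ℕ} : Category.{0} (SurjFinLe l) where
  Hom X Y := {f : Fin (X.n + 1) → Fin (Y.n + 1) // Function.Surjective f}
  id X := ⟨id, Function.surjective_id⟩
  comp f g := ⟨g.1 ∘ f.1, g.2.comp f.2⟩

/-- The functor `ι : FinSetSurj_ne,≤ℓ → FinSet*,≤N`, `I ↦ {*} ⊔ I` (for `ℓ ≤ N`). -/
def iotaSurjLe {l N : ℕ} (h : l ≤ N) : SurjFinLe l ⥤ PtdFinLe N where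
  obj X := ⟨X.n + 1, le_trans X.hn h⟩
  map f := fun i => some (f.1 i)
  map_id X := rfl
  map_comp f g := rfl

/-- The pointed map `ψ_{I∖{i},I}` in `FinSet*,≤N`. -/
def psiDelLe {N m : ℕ} (h : m + 1 ≤ N) (i : Fin (m + 1)) :
    (⟨m + 1, h⟩ : PtdFinLe N) ⟶ ⟨m, le_trans (Nat.le_succ m) h⟩ :=
  ⇑(finSuccEquiv' i)

/-- `G : FinSet*,≤N → A` is polynomial of degree `≤ n`:
`∩_{i ∈ I} ker G(ψ_{I∖{i},I}) = 0` for every finite set `I` with `n < |I| ≤ N`. -/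
noncomputable def IsPolyDegLEBdd {A : Type u} [Category.{v} A] [Abelian A]
    {N : ℕ} (n : ℕ) (G : PtdFinLe N ⥤ A) : Prop :=
  ∀ (m : ℕ) (h : m + 1 ≤ N), n < m + 1 →
    (Finset.univ.inf fun i : Fin (m + 1) =>
      kernelSubobject (G.map (psiDelLe h i))) = ⊥


/-!
A cone over `ι ⋙ G` is a compatible family `x_I ∈ G({*} ⊔ I)`. Pushing `x_I` forward along a
pointed map that hits the basepoint gives an element depending only on the image `V` of `I`;
call it `x_V`. Every `x_V` is the image of the basepoint element `x_∅ ∈ G({*})`: the alternating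
sum `E_q = ∑_{V ⊆ [q]} (-1)^|V| x_V` is killed by every `ψ_{[q]∖{i},[q]}` (the terms `V` and
`V ∪ {i}` cancel), so it vanishes for `q > n` by polynomiality, and for smaller `q` because
merging two points of `[q+1]` carries `E_{q+1}` to `E_q`; here `n + 2 ≤ ℓ` makes `E_{n+1}`
available. By induction on `|V|`, the relation `E_{|V|} = 0` expresses `x_V` through smaller
supports. Finally, for `|I| > n` the element `x_I` and the image of `x_∅` agree after every `ψ`,
hence agree, and smaller `I` are reached through merging surjections. So every cone factors
uniquely through the constant cone on `G({*})`.
-/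

open Finset

namespace PtdFinLe

variable {N : ℕ}

def homOfFun {a b : ℕ} (ha : a ≤ N) (hb : b ≤ N) (φ : Fin a → Option (Fin b)) :
    (⟨a, ha⟩ : PtdFinLe N) ⟶ ⟨b, hb⟩ :=
  φ

theorem map_homOfFun_comp {A : Type*} [Category A] (G : PtdFinLe N ⥤ A) {a b c : ℕ}
    (ha : a ≤ N) (hb : b ≤ N) (hc : c ≤ N)
    (φ : Fin a → Option (Fin b)) (ψ : Fin b → Option (Fin c)) :
    G.map (homOfFun ha hb φ) ≫ G.map (homOfFun hb hc ψ) =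
      G.map (homOfFun ha hc fun i => (φ i).bind ψ) :=
  (G.map_comp _ _).symm

theorem hom_ext_of_zero {h : 0 ≤ N} {Y : PtdFinLe N} (f g : (⟨0, h⟩ : PtdFinLe N) ⟶ Y) :
    f = g :=
  funext fun i => i.elim0

theorem psiDelLe_eq {m : ℕ} (h : m + 1 ≤ N) (i : Fin (m + 1)) :
    psiDelLe h i = homOfFun h (by omega) (finSuccEquiv' i) :=
  rfl

end PtdFinLe

open PtdFinLe

theorem card_finset_fin_add_one_le {q l : ℕ} (hq : q + 1 ≤ l) (V : Finset (Fin q)) :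
    #V + 1 ≤ l :=
  (Nat.succ_le_succ (card_finset_fin_le V)).trans hq

theorem sum_neg_one_pow_card_smul_eq_zero {α M : Type*} [Fintype α] [DecidableEq α]
    [AddCommGroup M] (F : Finset α → M) (a : α) (hF : ∀ t, F (insert a t) = F t) :
    ∑ t : Finset α, (-1 : ℤ) ^ #t • F t = 0 := by
  rw [← powerset_univ, ← insert_erase (mem_univ a), sum_powerset_insert (notMem_erase a _),
    ← sum_add_distrib]
  refine sum_eq_zero fun t ht => ?_
  have hat : a ∉ t := fun h => notMem_erase a univ (mem_powerset.mp ht h)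
  rw [card_insert_of_notMem hat, hF, pow_succ, mul_neg_one, neg_smul, add_neg_cancel]

theorem sum_finset_fin_succ {M : Type*} [AddCommMonoid M] {q : ℕ}
    (F : Finset (Fin (q + 1)) → M) :
    ∑ V, F V = ∑ t : Finset (Fin q),
      (F (t.image Fin.castSucc) + F (insert (Fin.last q) (t.image Fin.castSucc))) := by
  have huniv : (univ : Finset (Fin (q + 1))) = insert (Fin.last q) (univ.image Fin.castSucc) := by
    rw [Fin.image_castSucc, insert_compl_self]
  have hinj := image_injOn_powerset_of_injOn (s := univ) (Fin.castSucc_injective q).injOn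
  rw [← powerset_univ, huniv, sum_powerset_insert (by simp), powerset_image, sum_image hinj,
    sum_image hinj, ← sum_add_distrib, powerset_univ]

/-- The pointed map `V ⊔ {pt} → {*} ⊔ Fin q` sending `pt` to the basepoint and enumerating `V`
in increasing order. -/
def supportEmb {q : ℕ} (V : Finset (Fin q)) : Fin (#V + 1) → Option (Fin q) :=
  fun j => (finSuccEquivLast j).map (V.orderEmbOfFin rfl)

theorem supportEmb_injective {q : ℕ} (V : Finset (Fin q)) : Function.Injective (supportEmb V) :=
  (Option.map_injective (V.orderEmbOfFin rfl).injective).comp finSuccEquivLast.injective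

theorem supportEmb_last {q : ℕ} (V : Finset (Fin q)) : supportEmb V (Fin.last _) = none := by
  simp [supportEmb]

theorem mem_range_supportEmb {q : ℕ} {V : Finset (Fin q)} {o : Option (Fin q)} :
    o ∈ Set.range (supportEmb V) ↔ ∀ y ∈ o, y ∈ V := by
  constructor
  · rintro ⟨j, rfl⟩ y hy
    obtain ⟨w, -, rfl⟩ := Option.mem_map.mp hy
    exact V.orderEmbOfFin_mem rfl w
  · rcases o with _ | y
    · exact fun _ => ⟨Fin.last _, supportEmb_last V⟩
    · intro hy
      obtain ⟨w, hw⟩ : y ∈ Set.range (V.orderEmbOfFin rfl) := by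
        simpa using hy y rfl
      exact ⟨w.castSucc, by simp [supportEmb, hw]⟩

section Cone

variable {A : Type u} [Category.{v} A] {l N : ℕ} {hlN : l ≤ N} {G : PtdFinLe N ⥤ A}
  (s : Cone (iotaSurjLe hlN ⋙ G))

def component (m : ℕ) (hm : m + 1 ≤ l) : s.pt ⟶ G.obj ⟨m + 1, hm.trans hlN⟩ :=
  s.π.app ⟨m, hm⟩

theorem component_comp_map_some {a b : ℕ} (ha : a + 1 ≤ l) (hb : b + 1 ≤ l)
    (τ : Fin (a + 1) → Fin (b + 1)) (hτ : Function.Surjective τ) :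
    component s a ha ≫ G.map (homOfFun (ha.trans hlN) (hb.trans hlN) fun j => some (τ j)) =
      component s b hb :=
  s.w (show (⟨a, ha⟩ : SurjFinLe l) ⟶ ⟨b, hb⟩ from ⟨τ, hτ⟩)

theorem component_comp_map_of_surjective {a b q : ℕ} (ha : a + 1 ≤ l) (hb : b + 1 ≤ l)
    (hq : q ≤ N) (τ : Fin (a + 1) → Fin (b + 1)) (hτ : Function.Surjective τ)
    (ψ : Fin (b + 1) → Option (Fin q)) :
    component s a ha ≫ G.map (homOfFun (ha.trans hlN) hq fun j => ψ (τ j)) =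
      component s b hb ≫ G.map (homOfFun (hb.trans hlN) hq ψ) := by
  rw [← component_comp_map_some s ha hb τ hτ, Category.assoc, map_homOfFun_comp]
  rfl

/-- The element `x_V` for `V ⊆ Fin q`. -/
def supportedElem {q : ℕ} (hq : q + 1 ≤ l) (V : Finset (Fin q)) :
    s.pt ⟶ G.obj ⟨q, by omega⟩ :=
  component s #V (card_finset_fin_add_one_le hq V) ≫
    G.map (homOfFun ((card_finset_fin_add_one_le hq V).trans hlN) _ (supportEmb V))

theorem component_comp_map_eq_supportedElem {a q : ℕ} (ha : a + 1 ≤ l) (hq : q + 1 ≤ l)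
    (φ : Fin (a + 1) → Option (Fin q)) (V : Finset (Fin q))
    (hφ : Set.range φ = Set.range (supportEmb V)) :
    component s a ha ≫ G.map (homOfFun (ha.trans hlN) (by omega) φ) = supportedElem s hq V := by
  -- `φ = supportEmb V ∘ τ` for a surjection `τ`, as the ranges agree and `supportEmb V` is
  -- injective.
  have hφV (j) : supportEmb V (Function.invFun (supportEmb V) (φ j)) = φ j :=
    Function.invFun_eq (show φ j ∈ Set.range (supportEmb V) from hφ ▸ Set.mem_range_self j)
  have hsurj : Function.Surjective fun j => Function.invFun (supportEmb V) (φ j) := by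
    intro w
    obtain ⟨j, hj⟩ : supportEmb V w ∈ Set.range φ := hφ ▸ Set.mem_range_self w
    exact ⟨j, by simp only [hj, Function.leftInverse_invFun (supportEmb_injective V) w]⟩
  rw [supportedElem, ← component_comp_map_of_surjective s ha _ _ _ hsurj]
  simp only [hφV]

theorem supportedElem_comp_map {q p : ℕ} (hq : q + 1 ≤ l) (hp : p + 1 ≤ l)
    (V : Finset (Fin q)) (θ : Fin q → Option (Fin p)) :
    supportedElem s hq V ≫ G.map (homOfFun (by omega) (by omega) θ) =
      supportedElem s hp (V.image θ).eraseNone := by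
  rw [supportedElem, Category.assoc, map_homOfFun_comp]
  refine component_comp_map_eq_supportedElem s _ hp _ _ (Set.ext fun o => ?_)
  rw [mem_range_supportEmb]
  constructor
  · rintro ⟨j, rfl⟩ z hz
    obtain ⟨y, hy, hyz⟩ := Option.mem_bind_iff.mp hz
    exact mem_eraseNone.mpr (mem_image.mpr ⟨y, mem_range_supportEmb.mp ⟨j, rfl⟩ y hy, hyz⟩)
  · rcases o with _ | z
    · exact fun _ => ⟨Fin.last _, by simp only [supportEmb_last, Option.bind_none]⟩
    · intro hz
      obtain ⟨y, hy, hyz⟩ := mem_image.mp (mem_eraseNone.mp (hz z rfl))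
      obtain ⟨j, hj⟩ := mem_range_supportEmb.mpr fun y' (hy' : some y = some y') =>
        Option.some_injective _ hy' ▸ hy
      exact ⟨j, show (supportEmb V j).bind θ = some z by rw [hj, Option.bind_some, hyz]⟩

theorem supportedElem_comp_map_some {q p : ℕ} (hq : q + 1 ≤ l) (hp : p + 1 ≤ l)
    (V : Finset (Fin q)) (f : Fin q → Fin p) :
    supportedElem s hq V ≫ G.map (homOfFun (by omega) (by omega) fun i => some (f i)) =
      supportedElem s hp (V.image f) := by
  rw [supportedElem_comp_map, show V.image (fun i => some (f i)) = (V.image f).image some from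
    image_image.symm, eraseNone_image_some]

theorem supportedElem_eq_supportedElem_univ_comp {q : ℕ} (hq : q + 1 ≤ l) (V : Finset (Fin q)) :
    supportedElem s hq V =
      supportedElem s (card_finset_fin_add_one_le hq V) (univ : Finset (Fin #V)) ≫
        G.map (homOfFun ((card_finset_fin_le V).trans (by omega)) (by omega)
          fun i => some (V.orderEmbOfFin rfl i)) := by
  rw [supportedElem_comp_map_some, image_orderEmbOfFin_univ]

def basepointElem (h : 1 ≤ l) : s.pt ⟶ G.obj ⟨0, Nat.zero_le N⟩ :=
  component s 0 h ≫ G.map (homOfFun (h.trans hlN) _ fun _ => none)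

theorem supportedElem_empty {q : ℕ} (hq : q + 1 ≤ l)
    (f : (⟨0, Nat.zero_le N⟩ : PtdFinLe N) ⟶ ⟨q, by omega⟩) :
    supportedElem s hq ∅ = basepointElem s (by omega) ≫ G.map f := by
  rw [basepointElem, Category.assoc, ← G.map_comp]
  refine (component_comp_map_eq_supportedElem s (by omega) hq (fun _ => none) ∅ ?_).symm
  ext o
  rw [Set.mem_range, mem_range_supportEmb]
  simp [Option.eq_none_iff_forall_not_mem, eq_comm]

end Cone

section Euler

variable {A : Type u} [Category.{v} A] [Preadditive A] {l N : ℕ} {hlN : l ≤ N}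
  {G : PtdFinLe N ⥤ A} (s : Cone (iotaSurjLe hlN ⋙ G))

/-- The alternating sum `E_q`. -/
def eulerSum {q : ℕ} (hq : q + 1 ≤ l) : s.pt ⟶ G.obj ⟨q, by omega⟩ :=
  ∑ V : Finset (Fin q), (-1 : ℤ) ^ #V • supportedElem s hq V

theorem eulerSum_comp_psiDelLe {m : ℕ} (hm : m + 1 + 1 ≤ l) (i : Fin (m + 1)) :
    eulerSum s hm ≫ G.map (psiDelLe (by omega) i) = 0 := by
  simp only [eulerSum, Preadditive.sum_comp, Preadditive.zsmul_comp, psiDelLe_eq,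
    supportedElem_comp_map s hm (by omega : m + 1 ≤ l)]
  refine sum_neg_one_pow_card_smul_eq_zero _ i fun t => ?_
  congr 1
  ext z
  simp

theorem eulerSum_comp_map_snoc {q : ℕ} (hq : q + 1 ≤ l) (hq' : q + 1 + 1 ≤ l) (j : Fin q) :
    eulerSum s hq' ≫ G.map (homOfFun (by omega) (by omega)
        fun i => some (Fin.snoc (α := fun _ => Fin q) id j i)) = eulerSum s hq := by
  simp only [eulerSum, Preadditive.sum_comp, Preadditive.zsmul_comp,
    supportedElem_comp_map_some s hq' hq]
  have hlast (t : Finset (Fin q)) : Fin.last q ∉ t.image Fin.castSucc := by simp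
  have hcard (t : Finset (Fin q)) : #(t.image Fin.castSucc) = #t :=
    card_image_of_injective t (Fin.castSucc_injective q)
  have himage (t : Finset (Fin q)) :
      (t.image Fin.castSucc).image (Fin.snoc (α := fun _ => Fin q) id j) = t := by
    rw [image_image]
    simp
  have himage_insert (t : Finset (Fin q)) :
      (insert (Fin.last q) (t.image Fin.castSucc)).image (Fin.snoc (α := fun _ => Fin q) id j) =
        insert j t := by
    rw [image_insert, himage, Fin.snoc_last]
  -- The subsets containing `Fin.last q` contribute `-∑ t, (-1) ^ #t • x_{insert j t}`, which
  -- vanishes by pairing `t` with `insert j t`.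
  rw [sum_finset_fin_succ]
  simp only [himage, himage_insert, card_insert_of_notMem (hlast _), hcard, pow_succ, mul_neg_one,
    neg_smul, sum_add_distrib, sum_neg_distrib]
  rw [sum_neg_one_pow_card_smul_eq_zero (fun t => supportedElem s hq (insert j t)) j
    fun t => by rw [insert_idem], neg_zero, add_zero]

end Euler

theorem IsPolyDegLEBdd.hom_ext {A : Type u} [Category.{v} A] [Abelian A] {n N : ℕ}
    {G : PtdFinLe N ⥤ A} (hG : IsPolyDegLEBdd n G) {m : ℕ} (h : m + 1 ≤ N) (hn : n < m + 1)
    {T : A} {v w : T ⟶ G.obj ⟨m + 1, h⟩}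
    (hvw : ∀ i, v ≫ G.map (psiDelLe h i) = w ≫ G.map (psiDelLe h i)) : v = w := by
  rw [← sub_eq_zero, ← Subobject.bot_factors_iff_zero, ← hG m h hn,
    Subobject.finset_inf_factors]
  exact fun i _ => kernelSubobject_factors _ _ (by rw [Preadditive.sub_comp, hvw, sub_self])

section PolynomialFunctor

variable {A : Type u} [Category.{v} A] [Abelian A] {n l N : ℕ} {hlN : l ≤ N}
  {G : PtdFinLe N ⥤ A} (s : Cone (iotaSurjLe hlN ⋙ G))

theorem eulerSum_eq_zero (hnl : n + 2 ≤ l) (hG : IsPolyDegLEBdd n G) {q : ℕ} (hq1 : 1 ≤ q)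
    (hq : q + 1 ≤ l) : eulerSum s hq = 0 := by
  induction h : n + 1 - q generalizing q with
  | zero =>
    obtain ⟨m, rfl⟩ : ∃ m, q = m + 1 := ⟨q - 1, by omega⟩
    exact hG.hom_ext (by omega) (by omega) fun i => by
      rw [eulerSum_comp_psiDelLe, zero_comp]
  | succ d ih =>
    rw [← eulerSum_comp_map_snoc s hq (by omega) ⟨0, hq1⟩,
      ih (by omega) (by omega) (by omega), zero_comp]

theorem supportedElem_univ_eq_of_eulerSum_eq_zero {c : ℕ} (hc : c + 1 ≤ l) (hc1 : 1 ≤ c)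
    (hE : eulerSum s hc = 0) {y : s.pt ⟶ G.obj ⟨c, by omega⟩}
    (hy : ∀ V ≠ univ, supportedElem s hc V = y) : supportedElem s hc univ = y := by
  have hsum : ∑ V : Finset (Fin c), (-1 : ℤ) ^ #V • (supportedElem s hc V - y) = 0 := by
    simp only [smul_sub, sum_sub_distrib, ← sum_smul]
    rw [← eulerSum, hE, ← powerset_univ, sum_powerset_neg_one_pow_card_of_nonempty
      (univ_nonempty_iff.mpr ⟨⟨0, hc1⟩⟩), zero_smul, sub_zero]
  rw [sum_eq_single univ (fun V _ hV => by rw [hy V hV, sub_self, smul_zero]) (by simp)] at hsum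
  rw [card_univ, Fintype.card_fin] at hsum
  rcases neg_one_pow_eq_or ℤ c with h | h <;>
    simpa [h, sub_eq_zero, eq_comm] using hsum

theorem supportedElem_eq_basepointElem_comp (hnl : n + 2 ≤ l) (hG : IsPolyDegLEBdd n G)
    {q : ℕ} (hq : q + 1 ≤ l) (V : Finset (Fin q))
    (f : (⟨0, Nat.zero_le N⟩ : PtdFinLe N) ⟶ ⟨q, by omega⟩) :
    supportedElem s hq V = basepointElem s (by omega) ≫ G.map f := by
  induction h : #V using Nat.strong_induction_on generalizing q with
  | _ c ih =>
    obtain rfl | hV := V.eq_empty_or_nonempty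
    · exact supportedElem_empty s hq f
    have huniv : supportedElem s (card_finset_fin_add_one_le hq V) (univ : Finset (Fin #V)) =
        basepointElem s (by omega) ≫ G.map (homOfFun _ _ Fin.elim0) := by
      refine supportedElem_univ_eq_of_eulerSum_eq_zero s _ (card_pos.mpr hV)
        (eulerSum_eq_zero s hnl hG (card_pos.mpr hV) _) fun W hW => ?_
      have hWV : #W < #V := by simpa using (card_lt_iff_ne_univ W).mpr hW
      exact ih #W (h ▸ hWV) _ W _ rfl
    rw [supportedElem_eq_supportedElem_univ_comp, huniv, Category.assoc, ← G.map_comp,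
      hom_ext_of_zero (_ ≫ _) f]

theorem component_eq_basepointElem_comp (hnl : n + 2 ≤ l) (hG : IsPolyDegLEBdd n G)
    (m : ℕ) (hm : m + 1 ≤ l)
    (f : (⟨0, Nat.zero_le N⟩ : PtdFinLe N) ⟶ ⟨m + 1, hm.trans hlN⟩) :
    component s m hm = basepointElem s (by omega) ≫ G.map f := by
  induction h : n - m generalizing m with
  | zero =>
    refine hG.hom_ext (hm.trans hlN) (by omega) fun i => ?_
    have hrange :
        Set.range (finSuccEquiv' i) = Set.range (supportEmb (univ : Finset (Fin m))) := by
      rw [(finSuccEquiv' i).range_eq_univ, eq_comm, Set.eq_univ_iff_forall]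
      exact fun o => mem_range_supportEmb.mpr fun y _ => mem_univ y
    rw [psiDelLe_eq, component_comp_map_eq_supportedElem s hm hm _ _ hrange,
      supportedElem_eq_basepointElem_comp s hnl hG hm _ (f ≫ _), Category.assoc, G.map_comp]
  | succ d ih =>
    have hsurj : Function.Surjective (Fin.snoc (α := fun _ => Fin (m + 1)) id ⟨0, by omega⟩) :=
      fun w => ⟨w.castSucc, Fin.snoc_castSucc ..⟩
    rw [← component_comp_map_some s (by omega) hm _ hsurj,
      ih (m + 1) (by omega) (homOfFun _ _ Fin.elim0) (by omega), Category.assoc, ← G.map_comp,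
      hom_ext_of_zero (_ ≫ _) f]

end PolynomialFunctor

def basepointCone {l N : ℕ} (hlN : l ≤ N) {A : Type u} [Category.{v} A] (G : PtdFinLe N ⥤ A) :
    Cone (iotaSurjLe hlN ⋙ G) where
  pt := G.obj ⟨0, Nat.zero_le N⟩
  π :=
    { app J := G.map (homOfFun _ _ Fin.elim0)
      naturality J J' f := by
        dsimp
        exact (Category.id_comp _).trans ((congrArg G.map (hom_ext_of_zero _ _)).trans
          (G.map_comp _ _)) }

def basepointConeIsLimit {A : Type u} [Category.{v} A] [Abelian A] {n l N : ℕ}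
    (hnl : n + 2 ≤ l) (hlN : l ≤ N) (G : PtdFinLe N ⥤ A) (hG : IsPolyDegLEBdd n G) :
    IsLimit (basepointCone hlN G) where
  lift s := basepointElem s (by omega)
  fac s J := (component_eq_basepointElem_comp s hnl hG J.n J.hn _).symm
  uniq s f hf := by
    change s.pt ⟶ G.obj ⟨0, Nat.zero_le N⟩ at f
    have h1 : 1 ≤ l := by omega
    have h : f ≫ G.map (homOfFun _ (h1.trans hlN) Fin.elim0) = component s 0 h1 := hf ⟨0, h1⟩
    rw [basepointElem, ← h, Category.assoc, map_homOfFun_comp,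
      hom_ext_of_zero (homOfFun _ _ _) (𝟙 _), G.map_id, Category.comp_id]

/-- Vanishing of finite limits of polynomial functors: for a complete abelian
category `A`, nonnegative integers `n + 2 ≤ ℓ ≤ N`, and a polynomial functor
`G : FinSet*,≤N → A` of degree `≤ n`, the natural map
`lim_{I ∈ FinSetSurj_ne,≤ℓ} G({*} ⊔ I) → G({*})` is an isomorphism. -/
theorem finite_limit_of_polynomial_functor_is_trivial
    {A : Type u} [Category.{v} A] [Abelian A] [HasLimits A]
    {n l N : ℕ} (hnl : n + 2 ≤ l) (hlN : l ≤ N)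
    (G : PtdFinLe N ⥤ A) (hG : IsPolyDegLEBdd n G) :
    IsIso (limit.π (iotaSurjLe hlN ⋙ G) ⟨0, by omega⟩ ≫
      G.map (show (⟨1, by omega⟩ : PtdFinLe N) ⟶ ⟨0, by omega⟩ from fun _ => none)) :=
  ((limit.isLimit _).conePointUniqueUpToIso (basepointConeIsLimit hnl hlN G hG)).isIso_hom
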